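/- arXiv:1912.10697 — 2 statements merged into one kernel-verified Lean document; each statement's English description precedes it below -/
import Mathlib

section
/- The Q-function satisfies the dynamic programming principle: for every (x, u, t) ∈ ℝ^n × ℝ^m × [0,T] and every h > 0 with t + h ≤ T, Q(x, u, t) = inf over admissible u ∈ 𝕌₁ with x(t) = x, u(t) = u of [ ∫_t^{t+h} r(x(s), u(s)) ds + Q(x(t+h), u(t+h), t+h) ]. -/
open MeasureTheory Set

noncomputable section

/-- Carathéodory solution of `ẋ(s) = f(x(s), u(s))` on `[t, T]`:
`x s = x t + ∫_t^s f(x(τ), u(τ)) dτ` (with the integrand interval integrable). -/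
def IsTrajectory {n m : ℕ}
    (f : EuclideanSpace ℝ (Fin n) → EuclideanSpace ℝ (Fin m) → EuclideanSpace ℝ (Fin n))
    (t T : ℝ) (x : ℝ → EuclideanSpace ℝ (Fin n)) (u : ℝ → EuclideanSpace ℝ (Fin m)) : Prop :=
  ∀ s ∈ Set.Icc t T,
    IntervalIntegrable (fun τ => f (x τ) (u τ)) MeasureTheory.volume t s ∧
      x s = x t + ∫ τ in t..s, f (x τ) (u τ)

/-- The total cost `∫_t^T r(x(s), u(s)) ds + q(x(T))`. -/
def cost {n m : ℕ}
    (r : EuclideanSpace ℝ (Fin n) → EuclideanSpace ℝ (Fin m) → ℝ)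
    (q : EuclideanSpace ℝ (Fin n) → ℝ) (t T : ℝ)
    (x : ℝ → EuclideanSpace ℝ (Fin n)) (u : ℝ → EuclideanSpace ℝ (Fin m)) : ℝ :=
  (∫ s in t..T, r (x s) (u s)) + q (x T)

/-- Admissible controls `𝕌₁`: Lipschitz continuous on `[0, T]` with
Lipschitz constant (equivalently, `‖u̇‖_{L^∞}` bound) `M`. -/
def Adm {m : ℕ} (M T : ℝ) (u : ℝ → EuclideanSpace ℝ (Fin m)) : Prop :=
  LipschitzOnWith (Real.toNNReal M) u (Set.Icc 0 T)

/-- The Q-function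
`Q(x₀,u₀,t) = inf { ∫_t^T r(x(s),u(s)) ds + q(x(T)) : u ∈ 𝕌₁, x(t) = x₀, u(t) = u₀ }`. -/
def Qfun {n m : ℕ}
    (f : EuclideanSpace ℝ (Fin n) → EuclideanSpace ℝ (Fin m) → EuclideanSpace ℝ (Fin n))
    (r : EuclideanSpace ℝ (Fin n) → EuclideanSpace ℝ (Fin m) → ℝ)
    (q : EuclideanSpace ℝ (Fin n) → ℝ) (M T : ℝ)
    (x₀ : EuclideanSpace ℝ (Fin n)) (u₀ : EuclideanSpace ℝ (Fin m)) (t : ℝ) : ℝ :=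
  sInf { c : ℝ | ∃ x u, Adm M T u ∧ IsTrajectory f t T x u ∧
      x t = x₀ ∧ u t = u₀ ∧ c = cost r q t T x u }

/-! The tail of an admissible pair from `(x₀, u₀)` at time `t` is admissible from its state at
`t + h`, so its cost is the running cost on `[t, t + h]` plus a quantity `≥ Q` at `t + h`: the
right-hand side is `≤ Q(x₀, u₀, t)`. Conversely, gluing an `ε`-optimal pair from the state at
`t + h` onto any admissible pair (glued `M`-Lipschitz controls stay `M`-Lipschitz, glued
Carathéodory solutions stay solutions) puts `Q(x₀, u₀, t)` below every element of the right-hand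
side, which also bounds that set from below. All admissible sets are nonempty by Picard–Lindelöf
with a constant control, and all costs are bounded below since `r` and `q` are bounded. -/

open scoped NNReal

def concatAt {α : Type*} (a : ℝ) (φ ψ : ℝ → α) : ℝ → α :=
  fun s => if s ≤ a then φ s else ψ s

section concatAt

variable {α : Type*} {a : ℝ} {φ ψ : ℝ → α}

theorem concatAt_eqOn_left : EqOn (concatAt a φ ψ) φ (Iic a) :=
  fun _ hs => if_pos hs

theorem concatAt_eqOn_right (h : φ a = ψ a) : EqOn (concatAt a φ ψ) ψ (Ici a) := by
  intro s (hs : a ≤ s)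
  rcases hs.eq_or_lt with rfl | hs
  · exact (if_pos le_rfl).trans h
  · exact if_neg hs.not_ge

theorem LipschitzOnWith.concatAt [PseudoMetricSpace α] {K : ℝ≥0} {S : Set ℝ}
    (hS : S.OrdConnected) (hφ : LipschitzOnWith K φ (S ∩ Iic a))
    (hψ : LipschitzOnWith K ψ (S ∩ Ici a)) (h : φ a = ψ a) :
    LipschitzOnWith K (_root_.concatAt a φ ψ) S := by
  have dist_le_of_le : ∀ p ∈ S, ∀ s ∈ S, p ≤ s →
      dist (_root_.concatAt a φ ψ p) (_root_.concatAt a φ ψ s) ≤ K * dist p s := by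
    intro p hp s hs hps
    rcases le_or_gt s a with hsa | has
    · rw [concatAt_eqOn_left (hps.trans hsa), concatAt_eqOn_left hsa]
      exact hφ.dist_le_mul p ⟨hp, hps.trans hsa⟩ s ⟨hs, hsa⟩
    rcases le_or_gt a p with hap | hpa
    · rw [concatAt_eqOn_right h hap, concatAt_eqOn_right h has.le]
      exact hψ.dist_le_mul p ⟨hp, hap⟩ s ⟨hs, has.le⟩
    have haS : a ∈ S := hS.out hp hs ⟨hpa.le, has.le⟩
    rw [concatAt_eqOn_left hpa.le, concatAt_eqOn_right h has.le]
    calc dist (φ p) (ψ s) ≤ dist (φ p) (φ a) + dist (ψ a) (ψ s) := h ▸ dist_triangle _ _ _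
      _ ≤ K * dist p a + K * dist a s := by
          gcongr
          · exact hφ.dist_le_mul p ⟨hp, hpa.le⟩ a ⟨haS, mem_Iic.2 le_rfl⟩
          · exact hψ.dist_le_mul a ⟨haS, mem_Ici.2 le_rfl⟩ s ⟨hs, has.le⟩
      _ = K * dist p s := by
          rw [Real.dist_eq, Real.dist_eq, Real.dist_eq, abs_of_neg (by linarith),
            abs_of_neg (by linarith), abs_of_neg (by linarith)]
          ring
  refine LipschitzOnWith.of_dist_le_mul fun p hp s hs => ?_
  rcases le_total p s with hps | hsp
  · exact dist_le_of_le p hp s hs hps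
  · rw [dist_comm, dist_comm p]
    exact dist_le_of_le s hs p hp hsp

end concatAt

theorem exists_forall_mem_Icc_hasDerivWithinAt_of_lipschitzWith {E : Type*}
    [NormedAddCommGroup E] [NormedSpace ℝ E] [CompleteSpace E] {g : E → E} {K : ℝ≥0} {C : ℝ}
    (hg : LipschitzWith K g) (hC : ∀ x, ‖g x‖ ≤ C) {t₀ T : ℝ} (hT : t₀ ≤ T) (x₀ : E) :
    ∃ α : ℝ → E, α t₀ = x₀ ∧ ∀ s ∈ Icc t₀ T, HasDerivWithinAt α (g (α s)) (Icc t₀ T) s := by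
  have hC₀ : 0 ≤ C := (norm_nonneg _).trans (hC x₀)
  -- since `‖g‖ ≤ C`, solutions on `[t₀, T]` stay in the ball of radius `C (T - t₀)`
  have hpl : IsPicardLindelof (fun _ => g) (⟨t₀, le_rfl, hT⟩ : Icc t₀ T) x₀
      ⟨C * (T - t₀), mul_nonneg hC₀ (sub_nonneg.2 hT)⟩ 0 ⟨C, hC₀⟩ K :=
    .of_time_independent (fun x _ => hC x) hg.lipschitzOnWith (by simp [hT]; rfl)
  exact hpl.exists_eq_forall_mem_Icc_hasDerivWithinAt₀

section Trajectory

variable {n m : ℕ}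
  {f : EuclideanSpace ℝ (Fin n) → EuclideanSpace ℝ (Fin m) → EuclideanSpace ℝ (Fin n)}
  {t a T : ℝ} {x y : ℝ → EuclideanSpace ℝ (Fin n)} {u v : ℝ → EuclideanSpace ℝ (Fin m)}

theorem IsTrajectory.continuousOn (hx : IsTrajectory f t T x u) (htT : t ≤ T) :
    ContinuousOn x (Icc t T) := by
  have hint : IntegrableOn (fun τ => f (x τ) (u τ)) (uIcc t T) := by
    rw [uIcc_of_le htT, ← intervalIntegrable_iff_integrableOn_Icc_of_le htT]
    exact (hx T ⟨htT, le_rfl⟩).1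
  have hprim := (continuousOn_const (c := x t)).add
    (intervalIntegral.continuousOn_primitive_interval hint)
  rw [uIcc_of_le htT] at hprim
  exact hprim.congr fun s hs => (hx s hs).2

theorem IsTrajectory.mono {b : ℝ} (hx : IsTrajectory f t T x u) (hta : t ≤ a) (hbT : b ≤ T) :
    IsTrajectory f a b x u := by
  intro s hs
  have hsT : s ∈ Icc t T := ⟨hta.trans hs.1, hs.2.trans hbT⟩
  have haT : a ∈ Icc t T := ⟨hta, hs.1.trans hsT.2⟩
  have hint : IntervalIntegrable (fun τ => f (x τ) (u τ)) volume a s :=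
    (hx a haT).1.symm.trans (hx s hsT).1
  refine ⟨hint, ?_⟩
  rw [(hx s hsT).2, (hx a haT).2,
    ← intervalIntegral.integral_add_adjacent_intervals (hx a haT).1 hint, add_assoc]

theorem IsTrajectory.trans (hx₁ : IsTrajectory f t a x u) (hx₂ : IsTrajectory f a T x u)
    (hta : t ≤ a) : IsTrajectory f t T x u := by
  intro s hs
  rcases le_total s a with hsa | has
  · exact hx₁ s ⟨hs.1, hsa⟩
  have ha := hx₁ a ⟨hta, le_rfl⟩
  have hs₂ := hx₂ s ⟨has, hs.2⟩
  refine ⟨ha.1.trans hs₂.1, ?_⟩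
  rw [hs₂.2, ha.2, ← intervalIntegral.integral_add_adjacent_intervals ha.1 hs₂.1, add_assoc]

theorem IsTrajectory.congr (hx : IsTrajectory f t T x u) (hxy : EqOn x y (Icc t T))
    (huv : EqOn u v (Icc t T)) : IsTrajectory f t T y v := by
  intro s hs
  have heq : EqOn (fun τ => f (x τ) (u τ)) (fun τ => f (y τ) (v τ)) (uIcc t s) := by
    intro τ hτ
    rw [uIcc_of_le hs.1] at hτ
    have hτT : τ ∈ Icc t T := ⟨hτ.1, hτ.2.trans hs.2⟩
    simp only [hxy hτT, huv hτT]
  refine ⟨(hx s hs).1.congr (heq.mono uIoc_subset_uIcc), ?_⟩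
  rw [← hxy hs, ← hxy ⟨le_rfl, hs.1.trans hs.2⟩, ← intervalIntegral.integral_congr heq]
  exact (hx s hs).2

theorem IsTrajectory.of_hasDerivWithinAt
    (hx : ∀ s ∈ Icc t T, HasDerivWithinAt x (f (x s) (u s)) (Icc t T) s)
    (hf : ContinuousOn (fun s => f (x s) (u s)) (Icc t T)) : IsTrajectory f t T x u := by
  intro s hs
  have hsub : Icc t s ⊆ Icc t T := Icc_subset_Icc le_rfl hs.2
  have hint : IntervalIntegrable (fun τ => f (x τ) (u τ)) volume t s :=
    (hf.mono (uIcc_of_le hs.1 ▸ hsub)).intervalIntegrable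
  refine ⟨hint, ?_⟩
  have hderiv : ∀ τ ∈ Ioo t s, HasDerivWithinAt x (f (x τ) (u τ)) (Ioi τ) τ := fun τ hτ => by
    have hτ' : τ ∈ Ioo t T := ⟨hτ.1, hτ.2.trans_le hs.2⟩
    exact ((hx τ (Ioo_subset_Icc_self hτ')).hasDerivAt (Icc_mem_nhds hτ'.1 hτ'.2)).hasDerivWithinAt
  rw [intervalIntegral.integral_eq_sub_of_hasDeriv_right_of_le hs.1
    (fun τ hτ => (hx τ (hsub hτ)).continuousWithinAt.mono hsub) hderiv hint]
  abel

end Trajectory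

section Cost

variable {n m : ℕ}
  {f : EuclideanSpace ℝ (Fin n) → EuclideanSpace ℝ (Fin m) → EuclideanSpace ℝ (Fin n)}
  {r : EuclideanSpace ℝ (Fin n) → EuclideanSpace ℝ (Fin m) → ℝ}
  {q : EuclideanSpace ℝ (Fin n) → ℝ} {M t a T : ℝ}
  {x y x₁ x₂ : ℝ → EuclideanSpace ℝ (Fin n)} {u v u₁ u₂ : ℝ → EuclideanSpace ℝ (Fin m)}

theorem cost_eq_integral_add_cost
    (hta : IntervalIntegrable (fun s => r (x s) (u s)) volume t a)
    (haT : IntervalIntegrable (fun s => r (x s) (u s)) volume a T) :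
    cost r q t T x u = (∫ s in t..a, r (x s) (u s)) + cost r q a T x u := by
  rw [cost, cost, ← intervalIntegral.integral_add_adjacent_intervals hta haT, add_assoc]

theorem cost_congr (hxy : EqOn x y (Icc t T)) (huv : EqOn u v (Icc t T)) (htT : t ≤ T) :
    cost r q t T x u = cost r q t T y v := by
  have heq : EqOn (fun s => r (x s) (u s)) (fun s => r (y s) (v s)) (uIcc t T) := by
    intro s hs
    rw [uIcc_of_le htT] at hs
    simp only [hxy hs, huv hs]
  rw [cost, cost, intervalIntegral.integral_congr heq, hxy ⟨htT, le_rfl⟩]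

theorem neg_le_cost {Cr Cq : ℝ} (hrb : ∀ x u, |r x u| ≤ Cr) (hqb : ∀ x, |q x| ≤ Cq)
    (htT : t ≤ T) : -(Cr * (T - t) + Cq) ≤ cost r q t T x u := by
  have hint : ‖∫ s in t..T, r (x s) (u s)‖ ≤ Cr * |T - t| :=
    intervalIntegral.norm_integral_le_of_norm_le_const fun s _ => hrb (x s) (u s)
  rw [Real.norm_eq_abs, abs_of_nonneg (sub_nonneg.2 htT)] at hint
  rw [cost]
  linarith [(abs_le.1 hint).1, (abs_le.1 (hqb (x T))).1]

theorem IsTrajectory.intervalIntegrable_comp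
    (hr : Continuous fun p : EuclideanSpace ℝ (Fin n) × EuclideanSpace ℝ (Fin m) => r p.1 p.2)
    (hx : IsTrajectory f t T x u) (hu : ContinuousOn u (Icc t T)) (htT : t ≤ T) :
    IntervalIntegrable (fun s => r (x s) (u s)) volume t T :=
  (hr.comp_continuousOn ((hx.continuousOn htT).prodMk hu)).intervalIntegrable_of_Icc htT

theorem Adm.continuousOn_Icc {b : ℝ} (hu : Adm M T u) (ht : 0 ≤ t) (hbT : b ≤ T) :
    ContinuousOn u (Icc t b) :=
  LipschitzOnWith.continuousOn hu |>.mono (Icc_subset_Icc ht hbT)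

theorem Adm.concatAt (hu₁ : Adm M T u₁) (hu₂ : Adm M T u₂) (hu : u₁ a = u₂ a) :
    Adm M T (concatAt a u₁ u₂) :=
  LipschitzOnWith.concatAt ordConnected_Icc (hu₁.mono inter_subset_left)
    (hu₂.mono inter_subset_left) hu

theorem IsTrajectory.concatAt (hx₁ : IsTrajectory f t a x₁ u₁) (hx₂ : IsTrajectory f a T x₂ u₂)
    (hx : x₁ a = x₂ a) (hu : u₁ a = u₂ a) (hta : t ≤ a) :
    IsTrajectory f t T (concatAt a x₁ x₂) (concatAt a u₁ u₂) :=
  (hx₁.congr (concatAt_eqOn_left.mono Icc_subset_Iic_self).symm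
      (concatAt_eqOn_left.mono Icc_subset_Iic_self).symm).trans
    (hx₂.congr ((concatAt_eqOn_right hx).mono Icc_subset_Ici_self).symm
      ((concatAt_eqOn_right hu).mono Icc_subset_Ici_self).symm) hta

theorem cost_concatAt (h₁ : IntervalIntegrable (fun s => r (x₁ s) (u₁ s)) volume t a)
    (h₂ : IntervalIntegrable (fun s => r (x₂ s) (u₂ s)) volume a T)
    (hx : x₁ a = x₂ a) (hu : u₁ a = u₂ a) (hta : t ≤ a) (haT : a ≤ T) :
    cost r q t T (concatAt a x₁ x₂) (concatAt a u₁ u₂) =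
      (∫ s in t..a, r (x₁ s) (u₁ s)) + cost r q a T x₂ u₂ := by
  have hx₂ : EqOn (concatAt a x₁ x₂) x₂ (Icc a T) :=
    (concatAt_eqOn_right hx).mono Icc_subset_Ici_self
  have hu₂ : EqOn (concatAt a u₁ u₂) u₂ (Icc a T) :=
    (concatAt_eqOn_right hu).mono Icc_subset_Ici_self
  have e₁ : EqOn (fun s => r (x₁ s) (u₁ s))
      (fun s => r (concatAt a x₁ x₂ s) (concatAt a u₁ u₂ s)) (uIcc t a) := by
    intro s hs
    rw [uIcc_of_le hta] at hs
    simp only [concatAt_eqOn_left hs.2]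
  have e₂ : EqOn (fun s => r (x₂ s) (u₂ s))
      (fun s => r (concatAt a x₁ x₂ s) (concatAt a u₁ u₂ s)) (uIcc a T) := by
    intro s hs
    rw [uIcc_of_le haT] at hs
    simp only [hx₂ hs, hu₂ hs]
  rw [cost_eq_integral_add_cost (h₁.congr (e₁.mono uIoc_subset_uIcc))
      (h₂.congr (e₂.mono uIoc_subset_uIcc)), ← intervalIntegral.integral_congr e₁,
    cost_congr hx₂ hu₂ haT]

end Cost

section QFunction

variable {n m : ℕ}
  {f : EuclideanSpace ℝ (Fin n) → EuclideanSpace ℝ (Fin m) → EuclideanSpace ℝ (Fin n)}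
  {r : EuclideanSpace ℝ (Fin n) → EuclideanSpace ℝ (Fin m) → ℝ}
  {q : EuclideanSpace ℝ (Fin n) → ℝ} {M t a T Cf Cr Cq : ℝ} {Kf : ℝ≥0}
  {x : ℝ → EuclideanSpace ℝ (Fin n)} {u : ℝ → EuclideanSpace ℝ (Fin m)}

theorem exists_adm_isTrajectory (hfb : ∀ x u, ‖f x u‖ ≤ Cf)
    (hfl : LipschitzWith Kf fun p : EuclideanSpace ℝ (Fin n) × EuclideanSpace ℝ (Fin m) =>
      f p.1 p.2)
    (htT : t ≤ T) (x₀ : EuclideanSpace ℝ (Fin n)) (u₀ : EuclideanSpace ℝ (Fin m)) :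
    ∃ x u, Adm M T u ∧ IsTrajectory f t T x u ∧ x t = x₀ ∧ u t = u₀ := by
  have hg : LipschitzWith Kf fun y => f y u₀ := by
    simpa [Function.comp_def] using hfl.comp (LipschitzWith.prodMk_right u₀)
  obtain ⟨χ, hχ₀, hχ⟩ :=
    exists_forall_mem_Icc_hasDerivWithinAt_of_lipschitzWith hg (fun y => hfb y u₀) htT x₀
  refine ⟨χ, fun _ => u₀, (LipschitzWith.const' u₀).lipschitzOnWith,
    .of_hasDerivWithinAt hχ ?_, hχ₀, rfl⟩
  exact hg.continuous.comp_continuousOn fun s hs => (hχ s hs).continuousWithinAt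

theorem Qfun_le_cost (hrb : ∀ x u, |r x u| ≤ Cr) (hqb : ∀ x, |q x| ≤ Cq)
    (hu : Adm M T u) (hx : IsTrajectory f t T x u) (htT : t ≤ T) :
    Qfun f r q M T (x t) (u t) t ≤ cost r q t T x u := by
  refine csInf_le ?_ ⟨x, u, hu, hx, rfl, rfl, rfl⟩
  refine ⟨-(Cr * (T - t) + Cq), ?_⟩
  rintro c ⟨x', u', -, -, -, -, rfl⟩
  exact neg_le_cost hrb hqb htT

theorem exists_cost_lt_Qfun_add (hfb : ∀ x u, ‖f x u‖ ≤ Cf)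
    (hfl : LipschitzWith Kf fun p : EuclideanSpace ℝ (Fin n) × EuclideanSpace ℝ (Fin m) =>
      f p.1 p.2)
    (htT : t ≤ T) (x₀ : EuclideanSpace ℝ (Fin n)) (u₀ : EuclideanSpace ℝ (Fin m))
    {ε : ℝ} (hε : 0 < ε) :
    ∃ x u, Adm M T u ∧ IsTrajectory f t T x u ∧ x t = x₀ ∧ u t = u₀ ∧
      cost r q t T x u < Qfun f r q M T x₀ u₀ t + ε := by
  obtain ⟨x, u, hu, hx, hx₀, hu₀⟩ := exists_adm_isTrajectory (M := M) hfb hfl htT x₀ u₀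
  by_contra! hle
  have : Qfun f r q M T x₀ u₀ t + ε ≤ Qfun f r q M T x₀ u₀ t := by
    refine le_csInf ⟨_, x, u, hu, hx, hx₀, hu₀, rfl⟩ ?_
    rintro c ⟨x, u, hu, hx, hx₀, hu₀, rfl⟩
    exact hle x u hu hx hx₀ hu₀
  linarith

theorem Qfun_le_integral_add_Qfun (hfb : ∀ x u, ‖f x u‖ ≤ Cf)
    (hfl : LipschitzWith Kf fun p : EuclideanSpace ℝ (Fin n) × EuclideanSpace ℝ (Fin m) =>
      f p.1 p.2)
    (hrb : ∀ x u, |r x u| ≤ Cr) (hqb : ∀ x, |q x| ≤ Cq)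
    (hr : Continuous fun p : EuclideanSpace ℝ (Fin n) × EuclideanSpace ℝ (Fin m) => r p.1 p.2)
    (hu : Adm M T u) (hx : IsTrajectory f t T x u) (ht : 0 ≤ t) (hta : t ≤ a) (haT : a ≤ T) :
    Qfun f r q M T (x t) (u t) t ≤
      (∫ s in t..a, r (x s) (u s)) + Qfun f r q M T (x a) (u a) a := by
  refine le_of_forall_pos_le_add fun ε hε => ?_
  obtain ⟨x₂, u₂, hu₂, hx₂, hx₂a, hu₂a, hlt⟩ :=
    exists_cost_lt_Qfun_add (r := r) (q := q) (M := M) hfb hfl haT (x a) (u a) hε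
  have h₁ : IntervalIntegrable (fun s => r (x s) (u s)) volume t a :=
    (hx.mono le_rfl haT).intervalIntegrable_comp hr (hu.continuousOn_Icc ht haT) hta
  have h₂ : IntervalIntegrable (fun s => r (x₂ s) (u₂ s)) volume a T :=
    hx₂.intervalIntegrable_comp hr (hu₂.continuousOn_Icc (ht.trans hta) le_rfl) haT
  calc Qfun f r q M T (x t) (u t) t
      = Qfun f r q M T (concatAt a x x₂ t) (concatAt a u u₂ t) t := by
        rw [concatAt_eqOn_left hta, concatAt_eqOn_left hta]
    _ ≤ cost r q t T (concatAt a x x₂) (concatAt a u u₂) :=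
        Qfun_le_cost hrb hqb (hu.concatAt hu₂ hu₂a.symm)
          ((hx.mono le_rfl haT).concatAt hx₂ hx₂a.symm hu₂a.symm hta) (hta.trans haT)
    _ = (∫ s in t..a, r (x s) (u s)) + cost r q a T x₂ u₂ :=
        cost_concatAt h₁ h₂ hx₂a.symm hu₂a.symm hta haT
    _ ≤ (∫ s in t..a, r (x s) (u s)) + Qfun f r q M T (x a) (u a) a + ε := by
        rw [add_assoc]
        gcongr

theorem integral_add_Qfun_le_cost (hrb : ∀ x u, |r x u| ≤ Cr) (hqb : ∀ x, |q x| ≤ Cq)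
    (hr : Continuous fun p : EuclideanSpace ℝ (Fin n) × EuclideanSpace ℝ (Fin m) => r p.1 p.2)
    (hu : Adm M T u) (hx : IsTrajectory f t T x u) (ht : 0 ≤ t) (hta : t ≤ a) (haT : a ≤ T) :
    (∫ s in t..a, r (x s) (u s)) + Qfun f r q M T (x a) (u a) a ≤ cost r q t T x u := by
  have hxa : IsTrajectory f a T x u := hx.mono hta le_rfl
  rw [cost_eq_integral_add_cost
    ((hx.mono le_rfl haT).intervalIntegrable_comp hr (hu.continuousOn_Icc ht haT) hta)
    (hxa.intervalIntegrable_comp hr (hu.continuousOn_Icc (ht.trans hta) le_rfl) haT)]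
  gcongr
  exact Qfun_le_cost hrb hqb hu hxa haT

end QFunction

theorem dynamic_programming_principle_general {n m : ℕ}
    (f : EuclideanSpace ℝ (Fin n) → EuclideanSpace ℝ (Fin m) → EuclideanSpace ℝ (Fin n))
    (r : EuclideanSpace ℝ (Fin n) → EuclideanSpace ℝ (Fin m) → ℝ)
    (q : EuclideanSpace ℝ (Fin n) → ℝ) (M T : ℝ)
    (Cf Cr Cq : ℝ)
    (hfb : ∀ x u, ‖f x u‖ ≤ Cf) (hrb : ∀ x u, |r x u| ≤ Cr) (hqb : ∀ x, |q x| ≤ Cq)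
    (Kf Kr : NNReal)
    (hfl : LipschitzWith Kf (fun p : EuclideanSpace ℝ (Fin n) × EuclideanSpace ℝ (Fin m) => f p.1 p.2))
    (hrl : LipschitzWith Kr (fun p : EuclideanSpace ℝ (Fin n) × EuclideanSpace ℝ (Fin m) => r p.1 p.2))
    (x₀ : EuclideanSpace ℝ (Fin n)) (u₀ : EuclideanSpace ℝ (Fin m))
    (t : ℝ) (ht : t ∈ Set.Icc 0 T) (h : ℝ) (hh : 0 < h) (hth : t + h ≤ T) :
    Qfun f r q M T x₀ u₀ t =
      sInf { c : ℝ | ∃ x u, Adm M T u ∧ IsTrajectory f t T x u ∧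
          x t = x₀ ∧ u t = u₀ ∧
          c = (∫ s in t..(t + h), r (x s) (u s)) +
              Qfun f r q M T (x (t + h)) (u (t + h)) (t + h) } := by
  have hta : t ≤ t + h := le_add_of_nonneg_right hh.le
  have hQ_le : ∀ x u, Adm M T u → IsTrajectory f t T x u →
      Qfun f r q M T (x t) (u t) t ≤
        (∫ s in t..(t + h), r (x s) (u s)) + Qfun f r q M T (x (t + h)) (u (t + h)) (t + h) :=
    fun x u hu hx => Qfun_le_integral_add_Qfun hfb hfl hrb hqb hrl.continuous hu hx ht.1 hta hth
  obtain ⟨x, u, hu, hx, hx₀, hu₀⟩ := exists_adm_isTrajectory (M := M) hfb hfl ht.2 x₀ u₀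
  apply le_antisymm
  · refine le_csInf ⟨_, x, u, hu, hx, hx₀, hu₀, rfl⟩ ?_
    rintro c ⟨x, u, hu, hx, rfl, rfl, rfl⟩
    exact hQ_le x u hu hx
  · refine le_csInf ⟨_, x, u, hu, hx, hx₀, hu₀, rfl⟩ ?_
    rintro c ⟨x, u, hu, hx, hx₀, hu₀, rfl⟩
    refine (csInf_le ?_ ?_).trans
      (integral_add_Qfun_le_cost hrb hqb hrl.continuous hu hx ht.1 hta hth)
    · refine ⟨Qfun f r q M T x₀ u₀ t, ?_⟩
      rintro c ⟨x', u', hu', hx', rfl, rfl, rfl⟩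
      exact hQ_le x' u' hu' hx'
    · exact ⟨x, u, hu, hx, hx₀, hu₀, rfl⟩

/-- **Dynamic programming principle** for the Q-function: for every `(x₀, u₀, t)` and every
`h > 0` with `t + h ≤ T`,
`Q(x₀,u₀,t) = inf { ∫_t^{t+h} r(x(s),u(s)) ds + Q(x(t+h), u(t+h), t+h) : u ∈ 𝕌₁, x(t)=x₀, u(t)=u₀ }`. -/
theorem dynamic_programming_principle {n m : ℕ}
    (f : EuclideanSpace ℝ (Fin n) → EuclideanSpace ℝ (Fin m) → EuclideanSpace ℝ (Fin n))
    (r : EuclideanSpace ℝ (Fin n) → EuclideanSpace ℝ (Fin m) → ℝ)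
    (q : EuclideanSpace ℝ (Fin n) → ℝ) (M T : ℝ) (hM : 0 < M)
    (Cf Cr Cq : ℝ)
    (hfb : ∀ x u, ‖f x u‖ ≤ Cf) (hrb : ∀ x u, |r x u| ≤ Cr) (hqb : ∀ x, |q x| ≤ Cq)
    (Kf Kr Kq : NNReal)
    (hfl : LipschitzWith Kf (fun p : EuclideanSpace ℝ (Fin n) × EuclideanSpace ℝ (Fin m) => f p.1 p.2))
    (hrl : LipschitzWith Kr (fun p : EuclideanSpace ℝ (Fin n) × EuclideanSpace ℝ (Fin m) => r p.1 p.2))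
    (hql : LipschitzWith Kq q)
    (x₀ : EuclideanSpace ℝ (Fin n)) (u₀ : EuclideanSpace ℝ (Fin m))
    (t : ℝ) (ht : t ∈ Set.Icc 0 T) (h : ℝ) (hh : 0 < h) (hth : t + h ≤ T) :
    Qfun f r q M T x₀ u₀ t =
      sInf { c : ℝ | ∃ x u, Adm M T u ∧ IsTrajectory f t T x u ∧
          x t = x₀ ∧ u t = u₀ ∧
          c = (∫ s in t..(t + h), r (x s) (u s)) +
              Qfun f r q M T (x (t + h)) (u (t + h)) (t + h) } :=
  dynamic_programming_principle_general f r q M T Cf Cr Cq hfb hrb hqb Kf Kr hfl hrl x₀ u₀ t ht h hh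
    hth

end
end

section
/- Let Q : ℝ^n × ℝ^m → ℝ be continuously differentiable and satisfy the infinite-horizon HJB equation γQ(x, u) − r(x, u) − ∇_x Q(x, u) · f(x, u) + M|∇_u Q(x, u)| = 0 for all (x, u). Let (x(·), u(·)) be a trajectory with ẋ(t) = f(x(t), u(t)), u̇(t) = −M ∇_u Q(x(t), u(t)) / |∇_u Q(x(t), u(t))| (with ∇_u Q ≠ 0 along the trajectory), x(0) = x, u(0) = u. Then for every t ≥ 0, Q(x, u) = ∫_0^t e^{−γs} r(x(s), u(s)) ds + e^{−γt} Q(x(t), u(t)). -/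
/-!
Along the flow, the chain rule and the choice `u̇ = −M ∇ᵤQ/|∇ᵤQ|` turn the HJB equation into
`d/ds Q(x(s), u(s)) = γ Q(x(s), u(s)) − r(x(s), u(s))`. Hence the discounted value
`e^{−γs} Q(x(s), u(s))` has derivative `−e^{−γs} r(x(s), u(s))`, and the identity is the
fundamental theorem of calculus on `[0, t]`.
-/

open RealInnerProductSpace

theorem HasDerivAt.comp_prodMk_of_differentiableAt {E F : Type*} [NormedAddCommGroup E]
    [InnerProductSpace ℝ E] [CompleteSpace E] [NormedAddCommGroup F] [InnerProductSpace ℝ F]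
    [CompleteSpace F] {Q : E → F → ℝ} {x : ℝ → E} {u : ℝ → F}
    {x' : E} {u' : F} {s : ℝ} (hQ : DifferentiableAt ℝ (fun z : E × F => Q z.1 z.2) (x s, u s))
    (hx : HasDerivAt x x' s) (hu : HasDerivAt u u' s) :
    HasDerivAt (fun τ => Q (x τ) (u τ))
      (⟪gradient (fun y => Q y (u s)) (x s), x'⟫ + ⟪gradient (fun w => Q (x s) w) (u s), u'⟫) s := by
  set L := fderiv ℝ (fun z : E × F => Q z.1 z.2) (x s, u s)
  have hL := hQ.hasFDerivAt
  have hQx : HasFDerivAt (fun y => Q y (u s)) (L.comp (.inl ℝ E F)) (x s) :=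
    (hL.comp (x s) (hasFDerivAt_prodMk_left (𝕜 := ℝ) (x s) (u s)) :)
  have hQu : HasFDerivAt (fun w => Q (x s) w) (L.comp (.inr ℝ E F)) (u s) :=
    (hL.comp (u s) (hasFDerivAt_prodMk_right (x s) (u s)) :)
  have hsplit : L (x', u') = L (x', 0) + L (0, u') := by
    rw [← map_add, Prod.mk_add_mk, add_zero, zero_add]
  refine (hL.comp_hasDerivAt s (hx.prodMk hu)).congr_deriv ?_
  rw [hsplit, inner_gradient_left, inner_gradient_left, hQx.fderiv, hQu.fderiv]
  rfl

theorem real_inner_neg_div_norm_smul_self {F : Type*} [NormedAddCommGroup F]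
    [InnerProductSpace ℝ F] (M : ℝ) (g : F) : ⟪g, -(M / ‖g‖) • g⟫ = -(M * ‖g‖) := by
  rw [real_inner_smul_right, real_inner_self_eq_norm_sq]
  rcases eq_or_ne ‖g‖ 0 with hg | hg
  · simp [hg]
  · field_simp

theorem HasDerivAt.exp_neg_mul_mul {V : ℝ → ℝ} {γ ρ s : ℝ} (hV : HasDerivAt V (γ * V s - ρ) s) :
    HasDerivAt (fun τ => Real.exp (-γ * τ) * V τ) (-(Real.exp (-γ * s) * ρ)) s := by
  have hexp : HasDerivAt (fun τ => Real.exp (-γ * τ)) (Real.exp (-γ * s) * -γ) s := by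
    simpa using ((hasDerivAt_id s).const_mul (-γ)).exp
  exact (hexp.mul hV).congr_deriv (by ring)

theorem Q_integral_identity_along_optimal_flow_general {n m : ℕ}
    (f : EuclideanSpace ℝ (Fin n) → EuclideanSpace ℝ (Fin m) → EuclideanSpace ℝ (Fin n))
    (r : EuclideanSpace ℝ (Fin n) → EuclideanSpace ℝ (Fin m) → ℝ)
    (γ M : ℝ)
    (Kr : NNReal)
    (hrl : LipschitzWith Kr (fun p : EuclideanSpace ℝ (Fin n) × EuclideanSpace ℝ (Fin m) => r p.1 p.2))
    (Q : EuclideanSpace ℝ (Fin n) → EuclideanSpace ℝ (Fin m) → ℝ)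
    (hQC1 : ContDiff ℝ 1 (fun z : EuclideanSpace ℝ (Fin n) × EuclideanSpace ℝ (Fin m) => Q z.1 z.2))
    (hHJB : ∀ x u, γ * Q x u - r x u - ⟪gradient (fun y => Q y u) x, f x u⟫ +
      M * ‖gradient (fun w => Q x w) u‖ = 0)
    (xs : ℝ → EuclideanSpace ℝ (Fin n)) (us : ℝ → EuclideanSpace ℝ (Fin m))
    (hx : ∀ t, HasDerivAt xs (f (xs t) (us t)) t)
    (hu : ∀ t, HasDerivAt us
      (-(M / ‖gradient (fun w => Q (xs t) w) (us t)‖) •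
        gradient (fun w => Q (xs t) w) (us t)) t)
    (x₀ : EuclideanSpace ℝ (Fin n)) (u₀ : EuclideanSpace ℝ (Fin m))
    (hx₀ : xs 0 = x₀) (hu₀ : us 0 = u₀) :
    ∀ t : ℝ, 0 ≤ t →
      Q x₀ u₀ = (∫ s in (0:ℝ)..t, Real.exp (-γ * s) * r (xs s) (us s)) +
        Real.exp (-γ * t) * Q (xs t) (us t) := by
  intro t _
  have hvalue : ∀ s, HasDerivAt (fun τ => Q (xs τ) (us τ))
      (γ * Q (xs s) (us s) - r (xs s) (us s)) s := fun s => by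
    convert HasDerivAt.comp_prodMk_of_differentiableAt
      ((hQC1.differentiable one_ne_zero) _) (hx s) (hu s) using 1
    rw [real_inner_neg_div_norm_smul_self]
    linarith [hHJB (xs s) (us s)]
  have hr : Continuous fun s => r (xs s) (us s) :=
    hrl.continuous.comp <|
      continuous_iff_continuousAt.2 fun s => ((hx s).prodMk (hu s)).continuousAt
  have hintegrand : Continuous fun s => -(Real.exp (-γ * s) * r (xs s) (us s)) :=
    ((by fun_prop : Continuous fun s : ℝ => Real.exp (-γ * s)).mul hr).neg
  have hFTC := intervalIntegral.integral_eq_sub_of_hasDerivAt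
    (fun s _ => (hvalue s).exp_neg_mul_mul) (hintegrand.intervalIntegrable 0 t)
  rw [intervalIntegral.integral_neg, hx₀, hu₀] at hFTC
  simp only [mul_zero, Real.exp_zero, one_mul] at hFTC
  linarith

/-- **Integral Bellman equation along the optimal flow (infinite horizon)**: if `Q` is `C¹`
and satisfies the HJB equation `γQ − r − ∇ₓQ · f + M|∇ᵤQ| = 0`, and `(x(·), u(·))` is a
trajectory with `ẋ = f(x, u)`, `u̇ = −M ∇ᵤQ/|∇ᵤQ|` (with `∇ᵤQ ≠ 0` along the trajectory),
`x(0) = x₀`, `u(0) = u₀`, then for every `t ≥ 0`,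
`Q(x₀, u₀) = ∫_0^t e^{−γs} r(x(s), u(s)) ds + e^{−γt} Q(x(t), u(t))`. -/
theorem Q_integral_identity_along_optimal_flow {n m : ℕ}
    (f : EuclideanSpace ℝ (Fin n) → EuclideanSpace ℝ (Fin m) → EuclideanSpace ℝ (Fin n))
    (r : EuclideanSpace ℝ (Fin n) → EuclideanSpace ℝ (Fin m) → ℝ)
    (γ M : ℝ) (hγ : 0 < γ) (hM : 0 < M)
    (Cf Cr : ℝ) (hfb : ∀ x u, ‖f x u‖ ≤ Cf) (hrb : ∀ x u, |r x u| ≤ Cr)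
    (Kf Kr : NNReal)
    (hfl : LipschitzWith Kf (fun p : EuclideanSpace ℝ (Fin n) × EuclideanSpace ℝ (Fin m) => f p.1 p.2))
    (hrl : LipschitzWith Kr (fun p : EuclideanSpace ℝ (Fin n) × EuclideanSpace ℝ (Fin m) => r p.1 p.2))
    (Q : EuclideanSpace ℝ (Fin n) → EuclideanSpace ℝ (Fin m) → ℝ)
    (hQC1 : ContDiff ℝ 1 (fun z : EuclideanSpace ℝ (Fin n) × EuclideanSpace ℝ (Fin m) => Q z.1 z.2))
    (hHJB : ∀ x u, γ * Q x u - r x u - ⟪gradient (fun y => Q y u) x, f x u⟫ +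
      M * ‖gradient (fun w => Q x w) u‖ = 0)
    (xs : ℝ → EuclideanSpace ℝ (Fin n)) (us : ℝ → EuclideanSpace ℝ (Fin m))
    (hx : ∀ t, HasDerivAt xs (f (xs t) (us t)) t)
    (hgrad : ∀ t, gradient (fun w => Q (xs t) w) (us t) ≠ 0)
    (hu : ∀ t, HasDerivAt us
      (-(M / ‖gradient (fun w => Q (xs t) w) (us t)‖) •
        gradient (fun w => Q (xs t) w) (us t)) t)
    (x₀ : EuclideanSpace ℝ (Fin n)) (u₀ : EuclideanSpace ℝ (Fin m))
    (hx₀ : xs 0 = x₀) (hu₀ : us 0 = u₀) :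
    ∀ t : ℝ, 0 ≤ t →
      Q x₀ u₀ = (∫ s in (0:ℝ)..t, Real.exp (-γ * s) * r (xs s) (us s)) +
        Real.exp (-γ * t) * Q (xs t) (us t) :=
  Q_integral_identity_along_optimal_flow_general f r γ M Kr hrl Q hQC1 hHJB xs us hx hu x₀ u₀ hx₀
    hu₀
end
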